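/- arXiv:1302.6320 — 2 statements merged into one kernel-verified Lean document; each statement's English description precedes it below -/
import Mathlib

section
/- For any real α, the double-indexed expression p^{α+1/2} (1 - 1/r)^{α+1/2} r^{-(p-1)/2} tends to 0 as both integer variables p ≥ 2 and r ≥ 2 tend to infinity; that is, for every ε > 0 there exists N such that for all p, r ≥ N the expression is less than ε. -/
open Real

/-- p^{α+1/2} (1 - 1/r)^{α+1/2} r^{-(p-1)/2} → 0 as both p and r → ∞. -/
theorem scenario3_null_limit (α : ℝ) :
    ∀ ε : ℝ, 0 < ε → ∃ N : ℕ, ∀ p r : ℕ, N ≤ p → N ≤ r → 2 ≤ p → 2 ≤ r →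
      (p : ℝ) ^ (α + 1 / 2) * (1 - 1 / (r : ℝ)) ^ (α + 1 / 2) *
        (r : ℝ) ^ (-(((p : ℝ) - 1) / 2)) < ε := by
  intro ε hε
  set β : ℝ := α + 1 / 2 with hβ
  set C : ℝ := max 1 ((1 / 2 : ℝ) ^ β) with hC
  have hC0 : 0 < C := lt_of_lt_of_le one_pos (le_max_left _ _)
  have hlog2 : (0 : ℝ) < Real.log 2 / 2 := by positivity
  have h1 : Filter.Tendsto (fun x : ℝ => x ^ β * Real.exp (-(Real.log 2 / 2) * x))
      Filter.atTop (nhds 0) :=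
    tendsto_rpow_mul_exp_neg_mul_atTop_nhds_zero β _ hlog2
  have h2 : Filter.Tendsto (fun n : ℕ =>
      C * Real.exp (Real.log 2 / 2) *
        ((n : ℝ) ^ β * Real.exp (-(Real.log 2 / 2) * n))) Filter.atTop (nhds 0) := by
    have := (h1.comp (tendsto_natCast_atTop_atTop (R := ℝ))).const_mul
      (C * Real.exp (Real.log 2 / 2))
    simpa using this
  have h3 := h2.eventually_lt_const hε
  rw [Filter.eventually_atTop] at h3
  obtain ⟨N, hN⟩ := h3
  refine ⟨N, fun p r hNp _ hp2 hr2 => ?_⟩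
  have hpR : (2 : ℝ) ≤ (p : ℝ) := by exact_mod_cast hp2
  have hrR : (2 : ℝ) ≤ (r : ℝ) := by exact_mod_cast hr2
  have hp0 : (0 : ℝ) < p := by linarith
  have hr0 : (0 : ℝ) < r := by linarith
  -- bound on the middle factor
  have hbase : (1 / 2 : ℝ) ≤ 1 - 1 / (r : ℝ) := by
    have : 1 / (r : ℝ) ≤ 1 / 2 := by
      apply one_div_le_one_div_of_le <;> linarith
    linarith
  have hbase1 : (1 : ℝ) - 1 / (r : ℝ) ≤ 1 := by
    have : 0 < 1 / (r : ℝ) := by positivity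
    linarith
  have hmid : (1 - 1 / (r : ℝ)) ^ β ≤ C := by
    rcases le_or_gt 0 β with hb | hb
    · exact le_trans (Real.rpow_le_one (by linarith) hbase1 hb) (le_max_left _ _)
    · exact le_trans (Real.rpow_le_rpow_of_nonpos (by norm_num) hbase hb.le)
        (le_max_right _ _)
  have hmid0 : 0 ≤ (1 - 1 / (r : ℝ)) ^ β := Real.rpow_nonneg (by linarith) _
  -- bound on the last factor
  have hexp_nonpos : -(((p : ℝ) - 1) / 2) ≤ 0 := by linarith
  have hlast : (r : ℝ) ^ (-(((p : ℝ) - 1) / 2)) ≤ (2 : ℝ) ^ (-(((p : ℝ) - 1) / 2)) :=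
    Real.rpow_le_rpow_of_nonpos (by norm_num) hrR hexp_nonpos
  have hlast0 : 0 ≤ (r : ℝ) ^ (-(((p : ℝ) - 1) / 2)) := Real.rpow_nonneg hr0.le _
  have hp_pow0 : 0 ≤ (p : ℝ) ^ β := Real.rpow_nonneg hp0.le _
  -- rewrite 2 ^ (-(p-1)/2)
  have h2pow : (2 : ℝ) ^ (-(((p : ℝ) - 1) / 2)) =
      Real.exp (Real.log 2 / 2) * Real.exp (-(Real.log 2 / 2) * p) := by
    rw [Real.rpow_def_of_pos (by norm_num), ← Real.exp_add]
    ring_nf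
  have key : (p : ℝ) ^ β * (1 - 1 / (r : ℝ)) ^ β * (r : ℝ) ^ (-(((p : ℝ) - 1) / 2)) ≤
      C * Real.exp (Real.log 2 / 2) * ((p : ℝ) ^ β * Real.exp (-(Real.log 2 / 2) * p)) := by
    calc (p : ℝ) ^ β * (1 - 1 / (r : ℝ)) ^ β * (r : ℝ) ^ (-(((p : ℝ) - 1) / 2))
        ≤ (p : ℝ) ^ β * C * ((2 : ℝ) ^ (-(((p : ℝ) - 1) / 2))) := by
          apply mul_le_mul (mul_le_mul_of_nonneg_left hmid hp_pow0) hlast hlast0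
          positivity
      _ = C * Real.exp (Real.log 2 / 2) * ((p : ℝ) ^ β * Real.exp (-(Real.log 2 / 2) * p)) := by
          rw [h2pow]; ring
  exact lt_of_le_of_lt key (hN p hNp)
end

section
/- For any real α and any real δ > 0, the expression p^{α+1/2} (1 - 1/r)^{α+1/2} r^{-(1+α)/(r-1) + 1/2} ((1+δ)/r^{1/(r-1)})^{(p(r-1))/2 - (1+α)} tends to infinity as both integer variables p ≥ 2 and r ≥ 2 tend to infinity. -/
/-!
Since `r ^ (1 / (r - 1)) → 1`, for large `r` the base `(1 + δ) / r ^ (1 / (r - 1))` exceeds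
a fixed `c > 1`, while the exponent `p (r - 1) / 2 - (1 + α)` is at least `p / 2 - (1 + α)`.
The factors `(1 - 1 / r) ^ (α + 1 / 2)` and `r ^ (1 / 2 - (1 + α) / (r - 1))` stay bounded below
by positive constants, so the expression dominates a constant times `p ^ (α + 1 / 2) c ^ (p / 2)`,
which tends to infinity with `p`.
-/

open Real Filter Topology

lemma tendsto_exp_log_div_sub_one_atTop :
    Tendsto (fun x : ℝ => exp (log x / (x - 1))) atTop (𝓝 1) := by
  have h : Tendsto (fun x : ℝ => log x / (x - 1)) atTop (𝓝 0) := by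
    simpa [sub_eq_add_neg] using tendsto_pow_log_div_mul_add_atTop 1 (-1) 1 one_ne_zero
  have := (continuous_exp.tendsto 0).comp h
  rwa [exp_zero] at this

lemma tendsto_rpow_mul_rpow_atTop (β b : ℝ) {a c : ℝ} (ha : 0 < a) (hc : 1 < c) :
    Tendsto (fun x : ℝ => x ^ β * c ^ (a * x + b)) atTop atTop := by
  have hc0 : 0 < c := zero_lt_one.trans hc
  refine ((tendsto_exp_mul_div_rpow_atTop (-β) (a * log c)
    (mul_pos ha (log_pos hc))).const_mul_atTop (rpow_pos_of_pos hc0 b)).congr' ?_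
  filter_upwards [eventually_gt_atTop 0] with x hx
  rw [rpow_neg hx.le, div_inv_eq_mul, rpow_add hc0, rpow_def_of_pos hc0 (a * x)]
  ring_nf

lemma eventually_le_div_exp_log_div_sub_one {c d : ℝ} (hcd : c < d) :
    ∀ᶠ r : ℕ in atTop, c ≤ d / exp (log r / ((r : ℝ) - 1)) := by
  have h := (tendsto_const_nhds (x := d)).div
    (tendsto_exp_log_div_sub_one_atTop.comp tendsto_natCast_atTop_atTop) one_ne_zero
  rw [div_one] at h
  exact h.eventually_const_le hcd

lemma eventually_lt_mul_natCast_rpow_mul_rpow (M β b : ℝ) {K c : ℝ} (hK : 0 < K) (hc : 1 < c) :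
    ∀ᶠ n : ℕ in atTop, M < K * ((n : ℝ) ^ β * c ^ ((n : ℝ) / 2 - b)) := by
  have h := ((tendsto_rpow_mul_rpow_atTop β (-b) one_half_pos hc).const_mul_atTop hK).comp
    tendsto_natCast_atTop_atTop
  refine (h.eventually_gt_atTop M).mono fun n hn => hn.trans_eq ?_
  dsimp only [Function.comp_apply]
  ring_nf

lemma min_rpow_half_one_le_rpow (β : ℝ) {x : ℝ} (hx : 1 / 2 ≤ x) (hx1 : x ≤ 1) :
    min ((1 / 2 : ℝ) ^ β) 1 ≤ x ^ β := by
  rcases le_or_gt 0 β with hβ | hβ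
  · exact (min_le_left _ _).trans (rpow_le_rpow (by norm_num) hx hβ)
  · exact (min_le_right _ _).trans
      (one_le_rpow_of_pos_of_le_one_of_nonpos (by linarith) hx1 hβ.le)

lemma rpow_le_rpow_of_le_of_exponent_le {c q e f : ℝ} (hc : 1 ≤ c) (hcq : c ≤ q)
    (he : 0 ≤ e) (hef : e ≤ f) : c ^ e ≤ q ^ f :=
  calc c ^ e ≤ c ^ f := rpow_le_rpow_of_exponent_le hc hef
    _ ≤ q ^ f := rpow_le_rpow (by linarith) hcq (he.trans hef)

lemma mul_rpow_le_of_two_le {p r q c a β γ : ℝ} (hp : 0 ≤ p) (hr : 2 ≤ r) (hc : 1 ≤ c)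
    (hcq : c ≤ q) (hγ : 0 ≤ γ) (ha : 0 ≤ p / 2 - a) :
    min ((1 / 2 : ℝ) ^ β) 1 * (p ^ β * c ^ (p / 2 - a)) ≤
      p ^ β * (1 - 1 / r) ^ β * r ^ γ * q ^ (p * (r - 1) / 2 - a) := by
  have hr' : 1 / 2 ≤ 1 - 1 / r := by
    have := one_div_le_one_div_of_le two_pos hr; linarith
  have h1r := min_rpow_half_one_le_rpow β hr' (sub_le_self 1 (by positivity))
  have hrγ : 1 ≤ r ^ γ := one_le_rpow (by linarith) hγ
  have hcq' : c ^ (p / 2 - a) ≤ q ^ (p * (r - 1) / 2 - a) :=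
    rpow_le_rpow_of_le_of_exponent_le hc hcq ha (by nlinarith)
  have hpβ : 0 ≤ p ^ β := rpow_nonneg hp β
  have hcpos : 0 ≤ c ^ (p / 2 - a) := rpow_nonneg (by linarith) _
  calc min ((1 / 2 : ℝ) ^ β) 1 * (p ^ β * c ^ (p / 2 - a))
      = p ^ β * min ((1 / 2 : ℝ) ^ β) 1 * 1 * c ^ (p / 2 - a) := by ring
    _ ≤ p ^ β * (1 - 1 / r) ^ β * r ^ γ * q ^ (p * (r - 1) / 2 - a) := by gcongr

/-- The Scenario 3 alternative-model expression tends to infinity as both p and r → ∞. -/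
theorem scenario3_alt_divergence (α δ : ℝ) (hδ : 0 < δ) :
    ∀ M : ℝ, ∃ N : ℕ, ∀ p r : ℕ, N ≤ p → N ≤ r → 2 ≤ p → 2 ≤ r →
      M < (p : ℝ) ^ (α + 1 / 2) * (1 - 1 / (r : ℝ)) ^ (α + 1 / 2) *
        (r : ℝ) ^ (-(1 + α) / ((r : ℝ) - 1) + 1 / 2) *
        ((1 + δ) / Real.exp (Real.log r / ((r : ℝ) - 1))) ^
          ((p : ℝ) * ((r : ℝ) - 1) / 2 - (1 + α)) := by
  intro M
  obtain ⟨c, hc1, hcδ⟩ := exists_between (lt_add_of_pos_right 1 hδ)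
  have hK : 0 < min ((1 / 2 : ℝ) ^ (α + 1 / 2)) 1 :=
    lt_min (rpow_pos_of_pos one_half_pos _) one_pos
  have hγ_lim := (tendsto_const_nhds (x := -(1 + α))).div_atTop
    (tendsto_atTop_add_const_right _ (-1) tendsto_natCast_atTop_atTop)
  have hr : ∀ᶠ r : ℕ in atTop, c ≤ (1 + δ) / exp (log r / ((r : ℝ) - 1)) ∧
      0 ≤ -(1 + α) / ((r : ℝ) - 1) + 1 / 2 :=
    (eventually_le_div_exp_log_div_sub_one hcδ).and
      ((hγ_lim.eventually_const_le (by norm_num : (-(1 / 2) : ℝ) < 0)).mono fun r h => by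
        simp only [← sub_eq_add_neg] at h; linarith)
  have hp := (eventually_lt_mul_natCast_rpow_mul_rpow M (α + 1 / 2) (1 + α) hK hc1).and
    ((tendsto_natCast_atTop_atTop.eventually_ge_atTop (2 * (1 + α))).mono fun p h => by
      show 0 ≤ (p : ℝ) / 2 - (1 + α); linarith)
  obtain ⟨N₁, hN₁⟩ := eventually_atTop.1 hr
  obtain ⟨N₂, hN₂⟩ := eventually_atTop.1 hp
  refine ⟨max N₁ N₂, fun p r hpN hrN _ hr2 => ?_⟩
  obtain ⟨hcq, hγ⟩ := hN₁ r (le_of_max_le_left hrN)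
  obtain ⟨hM, ha⟩ := hN₂ p (le_of_max_le_right hpN)
  exact hM.trans_le (mul_rpow_le_of_two_le (by positivity) (by exact_mod_cast hr2)
    hc1.le hcq hγ ha)
end
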